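/- arXiv:2403.07754 — 3 statements merged into one kernel-verified Lean document; each statement's English description precedes it below -/
import Mathlib

section
/- Let x, y ∈ F_q^n with d(x, y) = d odd, e = (d-1)/2, t = e + ℓ with 1 ≤ ℓ < d/2, and suppose there exists u with d(x,u) = d(y,u) = (d+1)/2. Then |B_t(x) ∩ B_t(y)| ≥ Vol_q(ℓ - 1, n), where Vol_q(r, n) is the number of words in a Hamming ball of radius r in F_q^n. -/
/-!
The ball of radius `ℓ - 1` around `u` lies in both balls of radius `t`, by the triangle
inequality and `(d + 1) / 2 + (ℓ - 1) = t`. Its size is counted sphere by sphere: a word at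
distance `i` from `u` is determined by the `i` positions where it differs from `u` and a letter
other than `u j` at each of them.
-/

open Finset

section HammingCount

variable {ι F : Type*} [Fintype ι] [DecidableEq ι] [Fintype F] [DecidableEq F]

theorem card_filter_hammingDiff_eq (u : ι → F) (s : Finset ι) :
    #{v : ι → F | ({j | u j ≠ v j} : Finset ι) = s} = (Fintype.card F - 1) ^ #s := by
  have hpi : ({v : ι → F | ({j | u j ≠ v j} : Finset ι) = s} : Finset (ι → F)) =
      Fintype.piFinset fun j => if j ∈ s then univ.erase (u j) else {u j} := by
    ext v
    simp only [mem_filter, mem_univ, true_and, Fintype.mem_piFinset, Finset.ext_iff]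
    refine forall_congr' fun j => ?_
    split_ifs with hj <;> simp [hj, eq_comm]
  rw [hpi, Fintype.card_piFinset]
  calc ∏ j, #(if j ∈ s then univ.erase (u j) else {u j})
      = ∏ j, if j ∈ s then Fintype.card F - 1 else 1 :=
        prod_congr rfl fun j _ => by split_ifs <;> simp [card_erase_of_mem]
    _ = (Fintype.card F - 1) ^ #s := by rw [prod_ite_mem, univ_inter, prod_const]

theorem card_hammingSphere (u : ι → F) (i : ℕ) :
    #{v : ι → F | hammingDist u v = i} =
      (Fintype.card ι).choose i * (Fintype.card F - 1) ^ i := by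
  rw [card_eq_sum_card_fiberwise (f := fun v => ({j | u j ≠ v j} : Finset ι))
    (t := powersetCard i univ) fun v hv => by simpa [hammingDist] using hv]
  rw [sum_congr rfl fun s hs => ?_, sum_const, card_powersetCard, card_univ, smul_eq_mul]
  rw [mem_powersetCard] at hs
  rw [filter_filter, ← hs.2, ← card_filter_hammingDiff_eq u s]
  congr 1
  refine filter_congr fun v _ => ?_
  simp only [hammingDist, and_iff_right_iff_imp]
  rintro rfl
  rfl

theorem card_hammingBall (u : ι → F) (r : ℕ) :
    #{v : ι → F | hammingDist u v < r} =
      ∑ i ∈ range r, (Fintype.card ι).choose i * (Fintype.card F - 1) ^ i := by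
  rw [card_eq_sum_card_fiberwise (f := hammingDist u) (t := range r)
    fun v hv => by simpa using hv]
  refine sum_congr rfl fun i hi => ?_
  rw [filter_filter, ← card_hammingSphere u i]
  congr 1
  refine filter_congr fun v _ => ?_
  simp only [and_iff_right_iff_imp]
  rintro rfl
  simpa using hi

end HammingCount

theorem stmt_4_general {F : Type*} [Fintype F] [DecidableEq F] {n : ℕ}
    (x y : Fin n → F) (d e t ℓ : ℕ)
    (hodd : Odd d)
    (he : e = (d - 1) / 2) (ht : t = e + ℓ)
    (hu : ∃ u : Fin n → F, hammingDist x u = (d + 1) / 2 ∧ hammingDist y u = (d + 1) / 2) :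
    ∑ i ∈ Finset.range ℓ, Nat.choose n i * (Fintype.card F - 1) ^ i ≤
      (Finset.univ.filter
        (fun v : Fin n → F => hammingDist v x ≤ t ∧ hammingDist v y ≤ t)).card := by
  obtain ⟨u, hxu, hyu⟩ := hu
  have hradius : (d + 1) / 2 + ℓ = t + 1 := by
    obtain ⟨k, rfl⟩ := hodd
    omega
  have hball : ∀ z, hammingDist z u = (d + 1) / 2 → ∀ v, hammingDist u v < ℓ →
      hammingDist v z ≤ t := fun z hz v hv => by
    have := hammingDist_triangle v u z
    rw [hammingDist_comm v u, hammingDist_comm u z] at this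
    omega
  calc ∑ i ∈ range ℓ, n.choose i * (Fintype.card F - 1) ^ i
      = #{v : Fin n → F | hammingDist u v < ℓ} := by rw [card_hammingBall, Fintype.card_fin]
    _ ≤ _ := card_le_card fun v hv => by
      simp only [mem_filter, mem_univ, true_and] at hv ⊢
      exact ⟨hball x hxu v hv, hball y hyu v hv⟩

theorem stmt_4 {F : Type*} [Fintype F] [DecidableEq F] {n : ℕ}
    (x y : Fin n → F) (d e t ℓ : ℕ) (hℓ : 1 ≤ ℓ) (hℓd : 2 * ℓ < d)
    (hd : hammingDist x y = d) (hodd : Odd d)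
    (he : e = (d - 1) / 2) (ht : t = e + ℓ)
    (hu : ∃ u : Fin n → F, hammingDist x u = (d + 1) / 2 ∧ hammingDist y u = (d + 1) / 2) :
    ∑ i ∈ Finset.range ℓ, Nat.choose n i * (Fintype.card F - 1) ^ i ≤
      (Finset.univ.filter
        (fun v : Fin n → F => hammingDist v x ≤ t ∧ hammingDist v y ≤ t)).card :=
  stmt_4_general x y d e t ℓ hodd he ht hu
end

section
/- Let M be the multiplicity matrix built from a set Y' of reads in F_q^n with parameter μ, and define the cost C(M) = Σ_{i,j} binomial(M_{i,j} + 1, 2). Then C(M) = n · binomial(μ|Y'| + 1, 2) − (μ²/2) · Σ_{u,v ∈ Y'} d(u, v), where the sum is over all ordered pairs of reads and d is the Hamming distance. -/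
/-!
Work column by column. If the value `a` occurs `c a` times in column `j`, then
`2 * ∑ a, C(μ c a + 1, 2) = μ² ∑ a, (c a)² + μ |Y'|`, and `∑ a, (c a)²` counts the ordered pairs
of reads that agree in column `j`, i.e. `|Y'|²` minus the pairs that differ there. Summing the
latter over the columns gives `∑ u v, d(u, v)`, so `2 C(M) + μ² ∑ d = 2 n C(μ|Y'| + 1, 2)`.
-/

open Finset

lemma Nat.add_one_choose_two_mul_two (m : ℕ) : (m + 1).choose 2 * 2 = m * (m + 1) := by
  rw [← Nat.add_one_mul_choose_eq, Nat.choose_one_right, mul_comm]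

namespace Finset

variable {α β : Type*} [DecidableEq β] [Fintype β]

lemma sum_card_ne_add_sum_card_fiber_sq (s : Finset α) (f : α → β) :
    ∑ u ∈ s, #{v ∈ s | f u ≠ f v} + ∑ b, #{x ∈ s | f x = b} ^ 2 = #s ^ 2 := by
  have hfiber : ∑ u ∈ s, #{v ∈ s | f u = f v} = ∑ b, #{x ∈ s | f x = b} ^ 2 := by
    rw [← sum_fiberwise s f (fun u => #{v ∈ s | f u = f v})]
    refine sum_congr rfl fun b _ => ?_
    rw [sum_congr rfl fun u hu => by rw [(mem_filter.1 hu).2], sum_const, smul_eq_mul, sq]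
    simp_rw [eq_comm]
  rw [← hfiber, ← sum_add_distrib, sq, ← sum_const_nat]
  intro u _
  rw [add_comm]
  exact card_filter_add_card_filter_not _

lemma two_mul_sum_choose_fiber_add_sq_mul_sum_card_ne (s : Finset α) (f : α → β) (μ : ℕ) :
    2 * ∑ b, (μ * #{x ∈ s | f x = b} + 1).choose 2 + μ ^ 2 * ∑ u ∈ s, #{v ∈ s | f u ≠ f v} =
      2 * (μ * #s + 1).choose 2 := by
  have hsum : ∑ b, #{x ∈ s | f x = b} = #s :=
    (card_eq_sum_card_fiberwise fun x _ => mem_univ (f x)).symm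
  have hsq := sum_card_ne_add_sum_card_fiber_sq s f
  have hexpand (c : ℕ) : μ * c * (μ * c + 1) = μ ^ 2 * c ^ 2 + μ * c := by ring
  simp only [mul_comm 2, sum_mul, Nat.add_one_choose_two_mul_two, hexpand, sum_add_distrib,
    ← mul_sum, hsum]
  linear_combination μ ^ 2 * hsq

end Finset

lemma sum_sum_hammingDist_eq_sum_card_ne {ι : Type*} [Fintype ι] {β : ι → Type*}
    [∀ i, DecidableEq (β i)] (s : Finset (∀ i, β i)) :
    ∑ u ∈ s, ∑ v ∈ s, hammingDist u v = ∑ i, ∑ u ∈ s, #{v ∈ s | u i ≠ v i} := by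
  simp only [hammingDist, card_filter]
  conv_rhs => rw [sum_comm]
  exact sum_congr rfl fun _ _ => sum_comm

lemma Nat.eq_sub_div_two_of_two_mul_add_eq {a b c : ℕ} (h : 2 * a + b = 2 * c) :
    a = c - b / 2 := by
  omega

theorem stmt_8_general {F : Type*} [Fintype F] [DecidableEq F] {n : ℕ}
    (Y' : Finset (Fin n → F)) (μ : ℕ)
    (M : F → Fin n → ℕ)
    (hM : ∀ a j, M a j = μ * (Y'.filter (fun y => y j = a)).card) :
    ∑ a : F, ∑ j, Nat.choose (M a j + 1) 2 =
      n * Nat.choose (μ * Y'.card + 1) 2 -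
        μ ^ 2 * (∑ u ∈ Y', ∑ v ∈ Y', hammingDist u v) / 2 := by
  obtain rfl : M = fun a j => μ * #{y ∈ Y' | y j = a} := funext₂ hM
  apply Nat.eq_sub_div_two_of_two_mul_add_eq
  rw [sum_comm, sum_sum_hammingDist_eq_sum_card_ne, mul_sum, mul_sum, ← sum_add_distrib]
  simp only [two_mul_sum_choose_fiber_add_sq_mul_sum_card_ne, sum_const, card_univ,
    Fintype.card_fin, smul_eq_mul]
  ring

theorem stmt_8 {F : Type*} [Fintype F] [DecidableEq F] {n : ℕ}
    (Y' : Finset (Fin n → F)) (μ : ℕ) (hμ : 0 < μ)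
    (M : F → Fin n → ℕ)
    (hM : ∀ a j, M a j = μ * (Y'.filter (fun y => y j = a)).card) :
    ∑ a : F, ∑ j, Nat.choose (M a j + 1) 2 =
      n * Nat.choose (μ * Y'.card + 1) 2 -
        μ ^ 2 * (∑ u ∈ Y', ∑ v ∈ Y', hammingDist u v) / 2 :=
  stmt_8_general Y' μ M hM
end

section
/- Let M be the multiplicity matrix built from exactly two reads u, v ∈ F_q^n with parameter μ and d(u, v) = D. Then the cost C(M) = Σ_{i,j} binomial(M_{i,j}+1, 2) equals n·binomial(2μ+1, 2) − μ²·D = nμ(2μ+1) − μ²·D. -/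
lemma aux_ch (μ : ℕ) : Nat.choose (2 * μ + 1) 2 = 2 * Nat.choose (μ + 1) 2 + μ ^ 2 := by
  rw [Nat.choose_two_right, Nat.choose_two_right]
  have h1 : (2 * μ + 1) * (2 * μ + 1 - 1) = 2 * ((2 * μ + 1) * μ) := by
    simp [Nat.add_sub_cancel]; ring
  have h2 : (μ + 1) * (μ + 1 - 1) = μ * (μ + 1) := by
    simp [Nat.add_sub_cancel]; ring
  rw [h1, h2, Nat.mul_div_cancel_left _ (by norm_num)]
  have hev : 2 ∣ μ * (μ + 1) := (Nat.even_mul_succ_self μ).two_dvd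
  rw [Nat.mul_div_cancel' hev]
  ring

theorem stmt_16 {F : Type*} [Fintype F] [DecidableEq F] {n : ℕ}
    (u v : Fin n → F) (μ : ℕ) (hμ : 0 < μ)
    (M : F → Fin n → ℕ)
    (hM : ∀ a j, M a j = μ * ((if u j = a then 1 else 0) + (if v j = a then 1 else 0))) :
    ∑ a : F, ∑ j, Nat.choose (M a j + 1) 2 =
      n * Nat.choose (2 * μ + 1) 2 - μ ^ 2 * hammingDist u v := by
  rw [Finset.sum_comm]
  have hd : hammingDist u v = ∑ j : Fin n, (if u j = v j then 0 else 1) := by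
    simp [hammingDist, Finset.card_filter, eq_comm]
  have key : ∀ j : Fin n, (∑ a : F, Nat.choose (M a j + 1) 2)
      + μ ^ 2 * (if u j = v j then 0 else 1) = Nat.choose (2 * μ + 1) 2 := by
    intro j
    by_cases h : u j = v j
    · have : ∀ a : F, Nat.choose (M a j + 1) 2 =
          if u j = a then Nat.choose (2 * μ + 1) 2 else 0 := by
        intro a
        rw [hM]
        by_cases ha : u j = a
        · simp only [ha, ← h, if_true]; ring_nf
        · have hva : ¬ v j = a := fun hv => ha (h.trans hv)
          simp [ha, hva]
      simp only [this, Finset.sum_ite_eq, Finset.mem_univ, if_true, h, mul_zero, add_zero]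
    · have : ∀ a : F, Nat.choose (M a j + 1) 2 =
          (if u j = a then Nat.choose (μ + 1) 2 else 0)
          + (if v j = a then Nat.choose (μ + 1) 2 else 0) := by
        intro a
        rw [hM]
        by_cases h1 : u j = a <;> by_cases h2 : v j = a
        · exact absurd (h1.trans h2.symm) h
        · simp [h1, h2]
        · simp [h1, h2]
        · simp [h1, h2]
      rw [Finset.sum_congr rfl (fun a _ => this a), Finset.sum_add_distrib,
        Finset.sum_ite_eq, Finset.sum_ite_eq]
      simp only [Finset.mem_univ, if_true, h, if_false, mul_one]
      rw [aux_ch]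
      ring
  calc ∑ j : Fin n, ∑ a : F, Nat.choose (M a j + 1) 2
      = (∑ j : Fin n, ((∑ a : F, Nat.choose (M a j + 1) 2)
          + μ ^ 2 * (if u j = v j then 0 else 1)))
        - μ ^ 2 * hammingDist u v := by
        rw [Finset.sum_add_distrib, ← Finset.mul_sum, ← hd, Nat.add_sub_cancel]
    _ = n * Nat.choose (2 * μ + 1) 2 - μ ^ 2 * hammingDist u v := by
        rw [Finset.sum_congr rfl (fun j _ => key j), Finset.sum_const,
          Finset.card_univ, Fintype.card_fin, smul_eq_mul]
end
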